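/- arXiv:2306.11154 — 3 statements merged into one kernel-verified Lean document; each statement's English description precedes it below -/
import Mathlib

section
/- For any vectors a, b in R^n, let a+ and b+ denote their coordinate rearrangements in descending order. Then for any permutation ρ of {1,...,n}, the vector a+ + b+ majorizes the vector a+ + ρ∘b+ (where ρ∘b+ permutes the coordinates of b+). -/
open Finset

/-- A vector is sorted in descending order. -/
def DescSorted {n : ℕ} (a : Fin n → ℝ) : Prop :=
  ∀ i j : Fin n, i ≤ j → a j ≤ a i

/-- `b` is a descending rearrangement of `a`. -/
def DescSortOf {n : ℕ} (a b : Fin n → ℝ) : Prop :=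
  (∃ σ : Equiv.Perm (Fin n), ∀ i, b i = a (σ i)) ∧ DescSorted b

/-- Partial sum of the first `k` coordinates. -/
def psum {n : ℕ} (a : Fin n → ℝ) (k : ℕ) : ℝ :=
  ∑ i ∈ Finset.univ.filter (fun i : Fin n => (i : ℕ) < k), a i

/-- `a` majorizes `b`: after sorting both in descending order, all partial sums of `a`
dominate those of `b` for `k < n`, and the total sums agree. -/
def Majorizes {n : ℕ} (a b : Fin n → ℝ) : Prop :=
  ∀ a' b' : Fin n → ℝ, DescSortOf a a' → DescSortOf b b' →
    (∀ k : ℕ, k < n → psum b' k ≤ psum a' k) ∧ (∑ i, a' i = ∑ i, b' i)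

/-! `a⁺ + b⁺` is already descending, so it is its own descending rearrangement. The first `k`
coordinates of any rearrangement of `a⁺ + ρ ∘ b⁺` sum to a `k`-subset sum of `a⁺` plus a `k`-subset
sum of `b⁺`, and each is at most the corresponding sum of the first `k` coordinates. -/

theorem Finset.sum_le_sum_of_card_eq_of_forall_le {ι M : Type*} [AddCommMonoid M] [LinearOrder M]
    [IsOrderedAddMonoid M] {f : ι → M} {A B : Finset ι} (hAB : #A = #B)
    (h : ∀ i ∈ A, ∀ j ∈ B, f i ≤ f j) : ∑ i ∈ A, f i ≤ ∑ j ∈ B, f j := by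
  rcases B.eq_empty_or_nonempty with rfl | hB
  · simp_all
  calc ∑ i ∈ A, f i ≤ #A • B.inf' hB f :=
        sum_le_card_nsmul _ _ _ fun i hi => le_inf' hB f fun j hj => h i hi j hj
    _ = #B • B.inf' hB f := by rw [hAB]
    _ ≤ ∑ j ∈ B, f j := card_nsmul_le_sum _ _ _ fun j hj => inf'_le f hj

namespace DescSorted

variable {n : ℕ} {a b : Fin n → ℝ}

theorem add (ha : DescSorted a) (hb : DescSorted b) : DescSorted fun i => a i + b i :=
  fun i j hij => add_le_add (ha i j hij) (hb i j hij)

theorem eq_of_descSortOf (ha : DescSorted a) (h : DescSortOf a b) : b = a := by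
  obtain ⟨⟨σ, hσ⟩, hb⟩ := h
  have hbσ : b = a ∘ σ := funext hσ
  subst hbσ
  exact Tuple.unique_antitone (σ := σ) (τ := 1) (fun i j hij => hb i j hij)
    (fun i j hij => ha i j hij)

theorem sum_le_psum (ha : DescSorted a) {k : ℕ} {S : Finset (Fin n)}
    (hS : #S = #{i : Fin n | (i : ℕ) < k}) : ∑ i ∈ S, a i ≤ psum a k := by
  set L : Finset (Fin n) := {i : Fin n | (i : ℕ) < k}
  have hexchange : ∑ i ∈ S \ L, a i ≤ ∑ j ∈ L \ S, a j := by
    refine sum_le_sum_of_card_eq_of_forall_le (card_sdiff_comm hS) fun i hi j hj => ?_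
    simp only [L, mem_sdiff, mem_filter, mem_univ, true_and] at hi hj
    exact ha j i (Fin.le_def.2 (by omega))
  calc ∑ i ∈ S, a i = ∑ i ∈ S ∩ L, a i + ∑ i ∈ S \ L, a i := (sum_inter_add_sum_sdiff ..).symm
    _ ≤ ∑ i ∈ L ∩ S, a i + ∑ i ∈ L \ S, a i := by rw [inter_comm]; gcongr
    _ = psum a k := sum_inter_add_sum_sdiff ..

theorem psum_comp_perm_le (ha : DescSorted a) (σ : Equiv.Perm (Fin n)) (k : ℕ) :
    psum (fun i => a (σ i)) k ≤ psum a k := by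
  have hle :=
    ha.sum_le_psum (S := ({i : Fin n | (i : ℕ) < k} : Finset _).map σ.toEmbedding) (card_map _)
  rwa [sum_map] at hle

end DescSorted

theorem psum_add {n : ℕ} (a b : Fin n → ℝ) (k : ℕ) :
    psum (fun i => a i + b i) k = psum a k + psum b k :=
  sum_add_distrib

/-- for descending rearrangements `a⁺`, `b⁺` of `a`, `b`, and any
permutation `ρ`, the vector `a⁺ + b⁺` majorizes `a⁺ + ρ∘b⁺`. -/
theorem stmt0 {n : ℕ} (a b ap bp : Fin n → ℝ)
    (hap : DescSortOf a ap) (hbp : DescSortOf b bp) (ρ : Equiv.Perm (Fin n)) :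
    Majorizes (fun i => ap i + bp i) (fun i => ap i + bp (ρ i)) := by
  obtain ⟨-, hap⟩ := hap
  obtain ⟨-, hbp⟩ := hbp
  rintro a' b' ha' ⟨⟨σ, hσ⟩, -⟩
  obtain rfl : a' = fun i => ap i + bp i := (hap.add hbp).eq_of_descSortOf ha'
  obtain rfl : b' = fun i => ap (σ i) + bp ((σ.trans ρ) i) := funext hσ
  refine ⟨fun k _ => ?_, ?_⟩
  · rw [psum_add, psum_add]
    exact add_le_add (hap.psum_comp_perm_le σ k) (hbp.psum_comp_perm_le _ k)
  · simp only [sum_add_distrib, Equiv.sum_comp]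
end

section
/- (Hardy–Littlewood–Pólya) For vectors a, b in R^n, the inequality ∑_{i=1}^n h(a_i) ≥ ∑_{i=1}^n h(b_i) holds for all convex functions h: R → R if and only if a majorizes b. -/
/-!
Testing against the hinge functions `x ↦ max (x - t) 0` at `t = a'ₖ` and against `±x` gives
majorization. Conversely, for sorted `a'` and `b'` write
`h (a'ᵢ) - h (b'ᵢ) = cᵢ (a'ᵢ - b'ᵢ)` with `cᵢ` the divided difference of `h` at `b'ᵢ, a'ᵢ`
(the right derivative when the two points agree). Convexity makes divided differences monotone in
both points, so `cᵢ` is antitone, and Abel summation against the nonnegative partial sums of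
`a' - b'`, whose total vanishes, gives `∑ h (b'ᵢ) ≤ ∑ h (a'ᵢ)` (Karamata's inequality).
-/

open Finset

-- On the diagonal any subgradient would do; the right derivative is a canonical choice.
open Set in
noncomputable def divDiff (h : ℝ → ℝ) (x y : ℝ) : ℝ :=
  if x = y then derivWithin h (Ioi x) x else slope h x y

section divDiff

variable {h : ℝ → ℝ} {x x' y y' : ℝ}

lemma divDiff_comm (h : ℝ → ℝ) (x y : ℝ) : divDiff h x y = divDiff h y x := by
  by_cases hxy : x = y
  · rw [hxy]
  · rw [divDiff, divDiff, if_neg hxy, if_neg (Ne.symm hxy), slope_comm]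

lemma divDiff_mul_sub (h : ℝ → ℝ) (x y : ℝ) : divDiff h x y * (y - x) = h y - h x := by
  unfold divDiff
  split_ifs with hxy
  · simp [hxy]
  · rw [slope_def_field, div_mul_cancel₀ _ (sub_ne_zero.mpr (Ne.symm hxy))]

lemma ConvexOn.divDiff_mono_left (hh : ConvexOn ℝ Set.univ h) (hx : x ≤ x') :
    divDiff h x y ≤ divDiff h x' y := by
  rcases hx.eq_or_lt with rfl | hx
  · rfl
  have hint : ∀ z : ℝ, z ∈ interior Set.univ := by simp
  by_cases hyx : y = x
  · subst hyx
    rw [divDiff_comm h x' y]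
    simpa [divDiff, hx.ne] using hh.rightDeriv_le_slope_of_mem_interior (hint y) trivial hx
  by_cases hyx' : y = x'
  · subst hyx'
    simpa [divDiff, hx.ne] using (hh.slope_le_leftDeriv_of_mem_interior trivial (hint y) hx).trans
      (hh.leftDeriv_le_rightDeriv_of_mem_interior (hint y))
  · rw [divDiff_comm h x, divDiff_comm h x']
    simpa [divDiff, hyx, hyx'] using
      hh.slope_mono (Set.mem_univ y) ⟨trivial, Ne.symm hyx⟩ ⟨trivial, Ne.symm hyx'⟩ hx.le

lemma ConvexOn.divDiff_mono (hh : ConvexOn ℝ Set.univ h) (hx : x ≤ x') (hy : y ≤ y') :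
    divDiff h x y ≤ divDiff h x' y' :=
  calc divDiff h x y ≤ divDiff h x' y := hh.divDiff_mono_left hx
    _ = divDiff h y x' := divDiff_comm h x' y
    _ ≤ divDiff h y' x' := hh.divDiff_mono_left hy
    _ = divDiff h x' y' := divDiff_comm h y' x'

end divDiff

-- `n - 1` truncates to `0` at `n = 0`, where the left-hand side vanishes anyway.
lemma mul_sum_range_le_sum_range_mul {c d : ℕ → ℝ} {n : ℕ} (hc : AntitoneOn c (Set.Iio n))
    (hd : ∀ k < n, 0 ≤ ∑ i ∈ range k, d i) :
    c (n - 1) * ∑ i ∈ range n, d i ≤ ∑ i ∈ range n, c i * d i := by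
  induction n with
  | zero => simp
  | succ n ih =>
    have hcn : c n ≤ c (n - 1) := hc (by simp) (by simp) (Nat.sub_le n 1)
    have ih' := ih (hc.mono fun i hi => Nat.lt_succ_of_lt hi) fun k hk => hd k (by omega)
    have := mul_le_mul_of_nonneg_right hcn (hd n (by omega))
    rw [sum_range_succ, sum_range_succ, Nat.add_sub_cancel]
    linarith

theorem karamata_range {h : ℝ → ℝ} (hh : ConvexOn ℝ Set.univ h) {x y : ℕ → ℝ} {n : ℕ}
    (hx : AntitoneOn x (Set.Iio n)) (hy : AntitoneOn y (Set.Iio n))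
    (hxy : ∀ k < n, ∑ i ∈ range k, y i ≤ ∑ i ∈ range k, x i)
    (hsum : ∑ i ∈ range n, x i = ∑ i ∈ range n, y i) :
    ∑ i ∈ range n, h (y i) ≤ ∑ i ∈ range n, h (x i) := by
  have hc : AntitoneOn (fun i => divDiff h (y i) (x i)) (Set.Iio n) :=
    fun i hi j hj hij => hh.divDiff_mono (hy hi hj hij) (hx hi hj hij)
  have hd : ∀ k < n, 0 ≤ ∑ i ∈ range k, (x i - y i) := fun k hk => by
    rw [sum_sub_distrib]; linarith [hxy k hk]
  have habel := mul_sum_range_le_sum_range_mul hc hd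
  rw [sum_sub_distrib, hsum, sub_self, mul_zero] at habel
  simp_rw [divDiff_mul_sub] at habel
  rw [sum_sub_distrib] at habel
  linarith

section natExtend

variable {n : ℕ}

def natExtend (a : Fin n → ℝ) (i : ℕ) : ℝ :=
  if hi : i < n then a ⟨i, hi⟩ else 0

@[simp]
lemma natExtend_val (a : Fin n → ℝ) (i : Fin n) : natExtend a i = a i := by
  simp [natExtend]

lemma sum_comp_eq_sum_range_natExtend (g : ℝ → ℝ) (a : Fin n → ℝ) :
    ∑ i, g (a i) = ∑ i ∈ range n, g (natExtend a i) := by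
  simpa using Fin.sum_univ_eq_sum_range (fun i => g (natExtend a i)) n

lemma psum_eq_sum_range_natExtend (a : Fin n → ℝ) {k : ℕ} (hk : k ≤ n) :
    psum a k = ∑ i ∈ range k, natExtend a i := by
  have hrange : range k = (range n).filter (· < k) := by
    ext i; simp only [mem_range, mem_filter]; omega
  rw [psum, sum_filter, hrange, sum_filter]
  simpa using Fin.sum_univ_eq_sum_range (fun i => if i < k then natExtend a i else 0) n

lemma DescSorted.antitoneOn_natExtend {a : Fin n → ℝ} (ha : DescSorted a) :
    AntitoneOn (natExtend a) (Set.Iio n) := fun i hi j hj hij => by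
  simp only [natExtend, dif_pos (Set.mem_Iio.mp hi), dif_pos (Set.mem_Iio.mp hj)]
  exact ha _ _ hij

end natExtend

theorem DescSorted.karamata {n : ℕ} {a b : Fin n → ℝ} (ha : DescSorted a)
    (hb : DescSorted b) (hpsum : ∀ k < n, psum b k ≤ psum a k) (hsum : ∑ i, a i = ∑ i, b i)
    {h : ℝ → ℝ} (hh : ConvexOn ℝ Set.univ h) : ∑ i, h (b i) ≤ ∑ i, h (a i) := by
  simp only [sum_comp_eq_sum_range_natExtend h]
  refine karamata_range hh ha.antitoneOn_natExtend hb.antitoneOn_natExtend (fun k hk => ?_) ?_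
  · simpa only [psum_eq_sum_range_natExtend _ hk.le] using hpsum k hk
  · exact (sum_comp_eq_sum_range_natExtend id a).symm.trans
      (hsum.trans (sum_comp_eq_sum_range_natExtend id b))

lemma DescSortOf.sum_comp {n : ℕ} {a a' : Fin n → ℝ} (ha : DescSortOf a a') (g : ℝ → ℝ) :
    ∑ i, g (a' i) = ∑ i, g (a i) := by
  obtain ⟨⟨σ, hσ⟩, -⟩ := ha
  simp only [hσ]
  exact Equiv.sum_comp σ fun i => g (a i)

lemma exists_descSortOf {n : ℕ} (a : Fin n → ℝ) : ∃ a', DescSortOf a a' := by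
  let σ := Tuple.sort (OrderDual.toDual ∘ a)
  exact ⟨a ∘ σ, ⟨σ, fun _ => rfl⟩, fun i j hij => Tuple.monotone_sort (OrderDual.toDual ∘ a) hij⟩

lemma convexOn_max_sub_zero (t : ℝ) : ConvexOn ℝ Set.univ fun x : ℝ => max (x - t) 0 :=
  ((convexOn_id convex_univ).add_const (-t)).sup (convexOn_const 0 convex_univ)

lemma DescSorted.psum_le_of_sum_max_sub_le {n : ℕ} {a b : Fin n → ℝ} (ha : DescSorted a)
    (k : Fin n) (H : ∑ i, max (b i - a k) 0 ≤ ∑ i, max (a i - a k) 0) : psum b k ≤ psum a k := by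
  set s := univ.filter fun i : Fin n => (i : ℕ) < k
  have hsb : ∑ i ∈ s, (b i - a k) ≤ ∑ i, max (b i - a k) 0 :=
    (sum_le_sum fun i _ => le_max_left _ _).trans
      (sum_le_sum_of_subset_of_nonneg (subset_univ s) fun i _ _ => le_max_right _ _)
  -- Sorting makes `a i - a k` nonnegative exactly on the first `k` indices.
  have hsa : ∑ i, max (a i - a k) 0 = ∑ i ∈ s, (a i - a k) := by
    rw [← sum_subset (subset_univ s) fun i _ hi => max_eq_right (sub_nonpos.mpr
      (ha k i (not_lt.mp fun hik => hi (mem_filter.mpr ⟨mem_univ i, hik⟩))))]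
    exact sum_congr rfl fun i hi => max_eq_left (sub_nonneg.mpr (ha i k (mem_filter.mp hi).2.le))
  have := hsb.trans (H.trans hsa.le)
  rw [sum_sub_distrib, sum_sub_distrib] at this
  exact (sub_le_sub_iff_right _).mp this

theorem majorizes_of_forall_convexOn {n : ℕ} {a b : Fin n → ℝ}
    (H : ∀ h : ℝ → ℝ, ConvexOn ℝ Set.univ h → ∑ i, h (b i) ≤ ∑ i, h (a i)) : Majorizes a b := by
  intro a' b' ha hb
  have H' : ∀ h : ℝ → ℝ, ConvexOn ℝ Set.univ h → ∑ i, h (b' i) ≤ ∑ i, h (a' i) := fun h hh => by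
    rw [ha.sum_comp, hb.sum_comp]; exact H h hh
  refine ⟨fun k hk => ha.2.psum_le_of_sum_max_sub_le ⟨k, hk⟩ (H' _ (convexOn_max_sub_zero _)), ?_⟩
  have hle := H' id (convexOn_id convex_univ)
  have hge := H' (fun x => -x) (concaveOn_id convex_univ).neg
  simp only [id, sum_neg_distrib, neg_le_neg_iff] at hle hge
  exact le_antisymm hge hle

/-- Hardy–Littlewood–Pólya: `∑ h(a i) ≥ ∑ h(b i)` holds for all convex
functions `h : ℝ → ℝ` if and only if `a` majorizes `b`. -/
theorem stmt2 {n : ℕ} (a b : Fin n → ℝ) :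
    (∀ h : ℝ → ℝ, ConvexOn ℝ Set.univ h → ∑ i, h (b i) ≤ ∑ i, h (a i)) ↔ Majorizes a b := by
  refine ⟨majorizes_of_forall_convexOn, fun hM h hh => ?_⟩
  obtain ⟨a', ha⟩ := exists_descSortOf a
  obtain ⟨b', hb⟩ := exists_descSortOf b
  obtain ⟨hpsum, hsum⟩ := hM a' b' ha hb
  rw [← ha.sum_comp, ← hb.sum_comp]
  exact ha.2.karamata hb.2 hpsum hsum hh
end

section
/- In the noiseless instance with items of true scores R_1=9, R_2=8, R_3=4, where owners 1,...,m−1 each own items {1,2} and owner m owns items {2,3}, with the averaging mechanism R̂_i = (∑_{j owns i} R̂_i^j)/|{j owns i}| and each R̂^j the isotonic-regression estimate under owner j's reported ranking: if owners 1,...,m−1 report truthfully and owner m's utility is ∑_{i∈{2,3}} max{R̂_i − 5, 0}, then for all m ≥ 3 owner m strictly prefers reporting the flipped ranking (item 3 above item 2) — obtaining utility (3 − 2/m) + 1 — over the truthful ranking, which yields utility 3. -/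
/-!
Isotonic regression of two scores under one order constraint either leaves already ordered data
unchanged or pools violating data into their mean. Hence the truthful report returns the true
scores `(8, 4)`, while the flipped report makes owner `m`'s estimates of items 2 and 3 both `6`.
Averaging with the `m - 1` truthful estimates `8` of item 2 only lowers item 2 to `8 - 2/m`, so the
flip trades a loss of `2/m < 1` on item 2 for a gain of `1` on item 3.
-/

lemma isotonicFit_eq_of_le {y₁ y₂ r₁ r₂ : ℝ} (hy : y₁ ≤ y₂)
    (hopt : ∀ a b : ℝ, a ≤ b → (y₁ - r₁) ^ 2 + (y₂ - r₂) ^ 2 ≤ (y₁ - a) ^ 2 + (y₂ - b) ^ 2) :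
    r₁ = y₁ ∧ r₂ = y₂ := by
  have h := hopt y₁ y₂ hy
  constructor <;> nlinarith [sq_nonneg (y₁ - r₁), sq_nonneg (y₂ - r₂)]

lemma isotonicFit_eq_mean_of_le {y₁ y₂ r₁ r₂ : ℝ} (hy : y₂ ≤ y₁) (hr : r₁ ≤ r₂)
    (hopt : ∀ a b : ℝ, a ≤ b → (y₁ - r₁) ^ 2 + (y₂ - r₂) ^ 2 ≤ (y₁ - a) ^ 2 + (y₂ - b) ^ 2) :
    r₁ = (y₁ + y₂) / 2 ∧ r₂ = (y₁ + y₂) / 2 := by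
  set c := (y₁ + y₂) / 2
  have h := hopt c c le_rfl
  have hsum : (r₁ - c) ^ 2 + (r₂ - c) ^ 2 + (y₁ - y₂) * (r₂ - r₁) ≤ 0 := by
    simp only [c] at h ⊢; nlinarith
  have hcross : 0 ≤ (y₁ - y₂) * (r₂ - r₁) := mul_nonneg (by linarith) (by linarith)
  constructor <;> nlinarith [sq_nonneg (r₁ - c), sq_nonneg (r₂ - c)]

lemma averagedScore_sub {m : ℝ} (hm : m ≠ 0) (a x c : ℝ) :
    ((m - 1) * a + x) / m - c = (a - c) - (a - x) / m := by
  field_simp; ring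

theorem stmt17_general (m : ℕ) (hm : 3 ≤ m)
    (t₂ t₃ : ℝ)
    (ht_feas : t₂ ≤ t₃)
    (ht_opt : ∀ r₂ r₃ : ℝ, r₂ ≤ r₃ →
      (8 - t₂) ^ 2 + (4 - t₃) ^ 2 ≤ (8 - r₂) ^ 2 + (4 - r₃) ^ 2)
    (s₂ s₃ : ℝ)
    (hs_opt : ∀ r₂ r₃ : ℝ, r₃ ≤ r₂ →
      (8 - s₂) ^ 2 + (4 - s₃) ^ 2 ≤ (8 - r₂) ^ 2 + (4 - r₃) ^ 2) :
    max ((((m : ℝ) - 1) * 8 + t₂) / m - 5) 0 + max (t₃ - 5) 0 = (3 - 2 / m) + 1 ∧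
    max ((((m : ℝ) - 1) * 8 + s₂) / m - 5) 0 + max (s₃ - 5) 0 = 3 ∧
    max ((((m : ℝ) - 1) * 8 + s₂) / m - 5) 0 + max (s₃ - 5) 0 <
      max ((((m : ℝ) - 1) * 8 + t₂) / m - 5) 0 + max (t₃ - 5) 0 := by
  obtain ⟨rfl, rfl⟩ : s₃ = 4 ∧ s₂ = 8 :=
    isotonicFit_eq_of_le (by norm_num) fun a b hab => by linarith [hs_opt b a hab]
  obtain ⟨rfl, rfl⟩ : t₂ = 6 ∧ t₃ = 6 := by
    have h := isotonicFit_eq_mean_of_le (by norm_num) ht_feas ht_opt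
    norm_num at h; exact h
  have hm3 : (3 : ℝ) ≤ m := by exact_mod_cast hm
  have hm0 : (m : ℝ) ≠ 0 := by positivity
  have hloss : 2 / (m : ℝ) < 1 := by rw [div_lt_one (by positivity)]; linarith
  have hflip : max ((8 : ℝ) - 5 - (8 - 6) / m) 0 + max (6 - 5) 0 = 3 - 2 / m + 1 := by
    rw [max_eq_left (by linarith), max_eq_left (by norm_num)]; ring
  have htruth : max ((8 : ℝ) - 5 - (8 - 8) / m) 0 + max (4 - 5) 0 = 3 := by norm_num
  rw [averagedScore_sub hm0, averagedScore_sub hm0, hflip, htruth]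
  exact ⟨rfl, rfl, by linarith⟩

/-- noiseless instance with true scores `R₁ = 9, R₂ = 8, R₃ = 4`; owners
`1,...,m−1` own items `{1,2}` and report truthfully, owner `m` owns items `{2,3}`.
`(t₂, t₃)` is owner `m`'s isotonic-regression estimate under the flipped ranking
(item 3 above item 2) and `(s₂, s₃)` the estimate under the truthful ranking.
The averaging mechanism gives item 2 the score `((m−1)·8 + R̂₂^m)/m` and item 3 the score
`R̂₃^m`. With utility `∑_{i∈{2,3}} max{R̂_i − 5, 0}`, for all `m ≥ 3` the flipped report
yields utility `(3 − 2/m) + 1`, the truthful report yields `3`, and owner `m` strictly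
prefers the flipped report. -/
theorem stmt17 (m : ℕ) (hm : 3 ≤ m)
    (t₂ t₃ : ℝ)
    (ht_feas : t₂ ≤ t₃)
    (ht_opt : ∀ r₂ r₃ : ℝ, r₂ ≤ r₃ →
      (8 - t₂) ^ 2 + (4 - t₃) ^ 2 ≤ (8 - r₂) ^ 2 + (4 - r₃) ^ 2)
    (s₂ s₃ : ℝ)
    (hs_feas : s₃ ≤ s₂)
    (hs_opt : ∀ r₂ r₃ : ℝ, r₃ ≤ r₂ →
      (8 - s₂) ^ 2 + (4 - s₃) ^ 2 ≤ (8 - r₂) ^ 2 + (4 - r₃) ^ 2) :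
    max ((((m : ℝ) - 1) * 8 + t₂) / m - 5) 0 + max (t₃ - 5) 0 = (3 - 2 / m) + 1 ∧
    max ((((m : ℝ) - 1) * 8 + s₂) / m - 5) 0 + max (s₃ - 5) 0 = 3 ∧
    max ((((m : ℝ) - 1) * 8 + s₂) / m - 5) 0 + max (s₃ - 5) 0 <
      max ((((m : ℝ) - 1) * 8 + t₂) / m - 5) 0 + max (t₃ - 5) 0 :=
  stmt17_general m hm t₂ t₃ ht_feas ht_opt s₂ s₃ hs_opt
end
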